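/- arXiv:2001.07870 — 4 statements merged into one kernel-verified Lean document; each statement's English description precedes it below -/
import Mathlib

section
/- For all α, β, γ ∈ [0,1], the function φ(α,β,γ) = (1-α)(α - α²β) + α((γ - γ²β) - γ(1-β)) satisfies φ(α,β,γ) ≤ 1/4. -/
/-- For all `α, β, γ ∈ [0,1]`, we have
    `(1-α)(α - α²β) + α((γ - γ²β) - γ(1-β)) ≤ 1/4`. -/
theorem phi_le_quarter (α β γ : ℝ)
    (hα : α ∈ Set.Icc (0:ℝ) 1) (hβ : β ∈ Set.Icc (0:ℝ) 1) (hγ : γ ∈ Set.Icc (0:ℝ) 1) :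
    (1 - α) * (α - α^2 * β) + α * ((γ - γ^2 * β) - γ * (1 - β)) ≤ 1 / 4 := by
  obtain ⟨ha0, ha1⟩ := hα
  obtain ⟨hb0, hb1⟩ := hβ
  obtain ⟨hc0, hc1⟩ := hγ
  nlinarith [mul_nonneg (sub_nonneg.2 ha1) (sq_nonneg (2*α - 1)),
    mul_nonneg (mul_nonneg ha0 hb0) (sq_nonneg (2*γ - 1)),
    mul_nonneg (mul_nonneg ha0 (sub_nonneg.2 hb1)) (sq_nonneg (2*α - 1))]
end

section
/- Let G be a k-tree with vertex ordering v₁,...,vₙ where the first k vertices form a clique and each later vertex v is adjacent to a k-clique M_v of earlier vertices. Let C be a connected induced subgraph of G not containing any vertex of the initial clique. Then C contains exactly one vertex v with M_v ∩ C = ∅, namely the least vertex of C in the ordering. -/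
/-! The lower neighbours of every vertex of a `k`-tree form a clique (they lie in `M v`). Removing
the largest vertex `w` of a connected vertex set therefore keeps it connected: a walk through `w`
enters and leaves it via two neighbours of `w`, which are adjacent. Hence `C ∩ Iic v` is connected
for every `v`, so every `v ∈ C` other than `min C` has a smaller neighbour in `C`, i.e. one in
`M v`; and `M (min C)` misses `C` because its vertices precede `min C`. -/

open Finset

/-- `G` together with the data `M` is a `k`-tree with the vertex ordering of `Fin n`:
    the first `k` vertices form a clique, and every later vertex `v` is joined exactly
    to a `k`-clique `M v` of earlier vertices. -/
def IsKTree (n k : ℕ) (G : SimpleGraph (Fin n)) (M : Fin n → Finset (Fin n)) : Prop :=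
  (∀ v : Fin n, ∀ w ∈ M v, w < v) ∧
  (∀ v : Fin n, k ≤ (v : ℕ) → (M v).card = k) ∧
  (∀ v : Fin n, (v : ℕ) < k → M v = Finset.univ.filter (· < v)) ∧
  (∀ v w : Fin n, G.Adj v w ↔ (w ∈ M v ∨ v ∈ M w)) ∧
  (∀ v : Fin n, ∀ w₁ ∈ M v, ∀ w₂ ∈ M v, w₁ ≠ w₂ → G.Adj w₁ w₂)

namespace SimpleGraph

variable {V : Type*} {G : SimpleGraph V}

theorem preconnected_induce_of_insert {s : Set V} {w : V}
    (hw : G.IsClique (G.neighborSet w ∩ s)) (h : (G.induce (insert w s)).Preconnected) :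
    (G.induce s).Preconnected := by
  -- `c` stands for `a`: it is `a` itself or, if `a` is the new vertex `w`, a neighbour of `w`.
  have key : ∀ {a b : ↥(insert w s)} (p : (G.induce (insert w s)).Walk a b) (hb : ↑b ∈ s)
      (c : s), (↑c = (a : V) ∨ (↑a ∉ s ∧ G.Adj a c)) → (G.induce s).Reachable c ⟨b, hb⟩ := by
    intro a b p
    induction p with
    | nil =>
      rintro hb c (hc | ⟨ha, -⟩)
      · exact (Subtype.ext hc : c = ⟨_, hb⟩) ▸ .rfl
      · exact absurd hb ha
    | @cons a a' b haa' p ih =>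
      intro hb c hc
      replace haa' : G.Adj a a' := haa'
      by_cases ha' : (a' : V) ∈ s
      · refine .trans ?_ (ih hb ⟨a', ha'⟩ (.inl rfl))
        obtain hc | ⟨ha, hac⟩ := hc
        · exact Adj.reachable (show G.Adj c a' from hc ▸ haa')
        · have haw : (a : V) = w := (Set.mem_insert_iff.1 a.2).resolve_right ha
          by_cases hca : (c : V) = a'
          · exact (Subtype.ext hca : c = ⟨a', ha'⟩) ▸ .rfl
          · rw [haw] at hac haa'
            exact Adj.reachable (hw ⟨hac, c.2⟩ ⟨haa', ha'⟩ hca)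
      · have ha'w : (a' : V) = w := (Set.mem_insert_iff.1 a'.2).resolve_right ha'
        obtain hc | ⟨ha, -⟩ := hc
        · exact ih hb c (.inr ⟨ha', hc ▸ haa'.symm⟩)
        · have haw : (a : V) = w := (Set.mem_insert_iff.1 a.2).resolve_right ha
          exact absurd (haw.trans ha'w.symm) (G.ne_of_adj haa')
  intro x y
  obtain ⟨p⟩ := h ⟨x, .inr x.2⟩ ⟨y, .inr y.2⟩
  exact key p y.2 x (.inl rfl)

theorem preconnected_induce_inter_Iic [LinearOrder V]
    (hlow : ∀ v, G.IsClique {u | G.Adj v u ∧ u < v}) (C : Finset V)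
    (hC : (G.induce (C : Set V)).Preconnected) (t : V) :
    (G.induce ((C : Set V) ∩ Set.Iic t)).Preconnected := by
  classical
  induction C using Finset.induction_on_max with
  | empty => exact fun x => absurd x.2.1 (notMem_empty _)
  | insert w C hlt ih =>
    rw [coe_insert] at hC ⊢
    by_cases hwt : w ≤ t
    · have hsub : insert w (C : Set V) ⊆ Set.Iic t :=
        Set.insert_subset hwt fun c hc => ((hlt c hc).trans_le hwt).le
      rwa [Set.inter_eq_left.2 hsub]
    · have hw : G.IsClique (G.neighborSet w ∩ C) :=
        (hlow w).subset fun c hc => show G.Adj w c ∧ c < w from ⟨hc.1, hlt c hc.2⟩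
      rw [Set.insert_inter_of_notMem (show w ∉ Set.Iic t from hwt)]
      exact ih (preconnected_induce_of_insert hw hC)

end SimpleGraph

namespace IsKTree

variable {n k : ℕ} {G : SimpleGraph (Fin n)} {M : Fin n → Finset (Fin n)}

theorem mem_of_adj_of_lt (hG : IsKTree n k G M) {v u : Fin n} (hvu : G.Adj v u) (huv : u < v) :
    u ∈ M v :=
  ((hG.2.2.2.1 v u).1 hvu).resolve_right fun hv => (hG.1 u v hv).not_gt huv

theorem isClique_lowerNeighbors (hG : IsKTree n k G M) (v : Fin n) :
    G.IsClique {u | G.Adj v u ∧ u < v} := fun _ ⟨hu, hlt⟩ _ ⟨hu', hlt'⟩ =>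
  hG.2.2.2.2 v _ (hG.mem_of_adj_of_lt hu hlt) _ (hG.mem_of_adj_of_lt hu' hlt')

end IsKTree

theorem kTree_unique_witnessing_vertex_general (n k : ℕ) (G : SimpleGraph (Fin n))
    (M : Fin n → Finset (Fin n)) (hG : IsKTree n k G M)
    (C : Finset (Fin n)) (hC : C.Nonempty)
    (hconn : (G.induce (C : Set (Fin n))).Connected) :
    C.filter (fun v => Disjoint (M v) C) = {C.min' hC} := by
  have hM_min : Disjoint (M (C.min' hC)) C :=
    disjoint_left.2 fun u hu huC => (hG.1 _ u hu).not_ge (C.min'_le u huC)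
  have hM_ne : ∀ v ∈ C, v ≠ C.min' hC → ¬ Disjoint (M v) C := by
    intro v hv hvm hdisj
    set S : Set (Fin n) := (C : Set (Fin n)) ∩ Set.Iic v
    have hS : (G.induce S).Preconnected :=
      SimpleGraph.preconnected_induce_inter_Iic hG.isClique_lowerNeighbors C hconn.preconnected v
    have : Nontrivial S :=
      ⟨⟨⟨v, hv, le_refl v⟩, ⟨_, C.min'_mem hC, C.min'_le v hv⟩, fun h => hvm (congrArg Subtype.val h)⟩⟩
    obtain ⟨⟨u, huC, huv⟩, hvu⟩ := hS.exists_adj_of_nontrivial ⟨v, hv, le_refl v⟩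
    have huv' : u < v := lt_of_le_of_ne huv (G.ne_of_adj hvu).symm
    exact disjoint_left.1 hdisj (hG.mem_of_adj_of_lt hvu huv') huC
  ext v
  simp only [mem_filter, mem_singleton]
  exact ⟨fun ⟨hv, hdisj⟩ => by_contra fun hvm => hM_ne v hv hvm hdisj,
    fun hv => hv ▸ ⟨C.min'_mem hC, hM_min⟩⟩

/-- In a `k`-tree, a connected induced subgraph `C` avoiding the initial `k`-clique
    contains exactly one vertex `v` with `M v ∩ C = ∅`, namely the least vertex of `C`
    in the ordering. -/
theorem kTree_unique_witnessing_vertex (n k : ℕ) (G : SimpleGraph (Fin n))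
    (M : Fin n → Finset (Fin n)) (hG : IsKTree n k G M)
    (C : Finset (Fin n)) (hC : C.Nonempty)
    (hCk : ∀ v ∈ C, k ≤ (v : ℕ))
    (hconn : (G.induce (C : Set (Fin n))).Connected) :
    C.filter (fun v => Disjoint (M v) C) = {C.min' hC} :=
  kTree_unique_witnessing_vertex_general n k G M hG C hC hconn
end

section
/- Let G be a k-tree with n vertices, n ≥ k(k+1), and let S be a uniformly random ⌊n/(k+1)⌋-element subset of vertices. Then the expected number of connected components of G[S] is at least k^k/(k+1)^(k+1) · n − (k+2)/e. -/
open Finset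

/-!
A vertex `v ∈ S` with `M v ∩ S = ∅` has no lower neighbour in `G[S]`. Lower neighbourhoods in a
`k`-tree are cliques, so an interior maximum of a walk in `G[S]` can be bypassed; hence the
maximum of a shortest walk lies at an endpoint, and if `a < b` are connected in `G[S]` then `b`
has a lower neighbour there. So such vertices lie in distinct components. By double counting
their expected number is `(n-k) C(n-k-1, s-1) / C(n, s) = s C(n-s, k) / C(n, k)`, which is at
least `s ((n-s+1-k)/n)^k`; for `s = ⌊n/(k+1)⌋` Bernoulli's inequality and
`(k/(k+1))^(k+1) ≤ 1/e` turn this into the bound.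
-/

namespace SimpleGraph

variable {V : Type*} [LinearOrder V] {G : SimpleGraph V}

/-- The reverse of the order is a perfect elimination ordering of `G`. -/
def HasCliqueLowerNeighbors (G : SimpleGraph V) : Prop :=
  ∀ v, G.IsClique {w | G.Adj v w ∧ w < v}

namespace HasCliqueLowerNeighbors

theorem exists_shorter_walk (hG : G.HasCliqueLowerNeighbors) {a b m : V} (p : G.Walk a b)
    (hm : m ∈ p.support) (hma : m ≠ a) (hmb : m ≠ b) (hmax : ∀ x ∈ p.support, x ≤ m) :
    ∃ q : G.Walk a b, q.length < p.length := by
  set p₁ := p.takeUntil m hm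
  set p₂ := p.dropUntil m hm
  have h₁ : ¬ p₁.Nil := Walk.not_nil_of_ne hma.symm
  have h₂ : ¬ p₂.Nil := Walk.not_nil_of_ne hmb
  have hx : p₁.penultimate < m := (hmax _ <| p.support_takeUntil_subset_support hm <|
    p₁.getVert_mem_support _).lt_of_ne (p₁.adj_penultimate h₁).ne
  have hy : p₂.snd < m := (hmax _ <| p.support_dropUntil_subset_support hm <|
    p₂.getVert_mem_support _).lt_of_ne (p₂.adj_snd h₂).ne'
  obtain ⟨r, hr⟩ : ∃ r : G.Walk p₁.penultimate p₂.snd, r.length ≤ 1 := by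
    obtain hxy | hxy := eq_or_ne p₁.penultimate p₂.snd
    · exact ⟨Walk.nil.copy rfl hxy, by simp⟩
    · have hadj := hG m ⟨(p₁.adj_penultimate h₁).symm, hx⟩ ⟨p₂.adj_snd h₂, hy⟩ hxy
      exact ⟨hadj.toWalk, by simp⟩
  refine ⟨p₁.dropLast.append (r.append p₂.tail), ?_⟩
  have hp : p₁.length + p₂.length = p.length := by
    rw [← Walk.length_append, p.take_spec hm]
  have := p₁.length_dropLast_add_one h₁
  have := p₂.length_tail_add_one h₂
  simp only [Walk.length_append]
  omega

theorem exists_adj_lt_of_reachable (hG : G.HasCliqueLowerNeighbors) {a b : V} (hab : a < b)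
    (h : G.Reachable a b) :
    ∃ c, G.Adj b c ∧ c < b := by
  obtain ⟨p, hp⟩ := h.exists_walk_length_eq_dist
  obtain ⟨m, hm, hmax⟩ := p.support.toFinset.exists_max_image id ⟨b, by simp⟩
  simp only [List.mem_toFinset, id] at hm hmax
  by_cases hmb : m = b
  · subst hmb
    have hp : ¬ p.Nil := Walk.not_nil_of_ne hab.ne
    exact ⟨p.penultimate, (p.adj_penultimate hp).symm,
      (hmax _ (p.getVert_mem_support _)).lt_of_ne (p.adj_penultimate hp).ne⟩
  · have hma : m ≠ a := (hab.trans_le (hmax b p.end_mem_support)).ne'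
    obtain ⟨q, hq⟩ := hG.exists_shorter_walk p hm hma hmb hmax
    exact absurd (G.dist_le q) (by omega)

theorem induce (hG : G.HasCliqueLowerNeighbors) (s : Set V) :
    (G.induce s).HasCliqueLowerNeighbors :=
  fun v _ hx _ hy hxy => hG v ⟨hx.1, hx.2⟩ ⟨hy.1, hy.2⟩ (Subtype.coe_injective.ne hxy)

theorem card_le_card_connectedComponent_induce (hG : G.HasCliqueLowerNeighbors)
    {A S : Finset V} (hAS : A ⊆ S) (hA : ∀ v ∈ A, ∀ w ∈ S, G.Adj v w → v < w) :
    #A ≤ Nat.card (G.induce (S : Set V)).ConnectedComponent := by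
  have hnot_reach {u v : (S : Set V)} (huv : u < v) (h : (G.induce (S : Set V)).Reachable u v) :
      (v : V) ∉ A := fun hv => by
    obtain ⟨c, hvc, hcv⟩ := (hG.induce (S : Set V)).exists_adj_lt_of_reachable huv h
    exact (hA v hv c c.2 hvc).not_gt hcv
  let f : A → (G.induce (S : Set V)).ConnectedComponent :=
    fun v => connectedComponentMk _ ⟨v, hAS v.2⟩
  have hf : f.Injective := by
    rintro ⟨u, hu⟩ ⟨v, hv⟩ huv
    have h := ConnectedComponent.exact huv
    rcases lt_trichotomy u v with huv | rfl | huv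
    · exact absurd hv (hnot_reach (u := ⟨u, hAS hu⟩) (v := ⟨v, hAS hv⟩) huv h)
    · rfl
    · exact absurd hu (hnot_reach (u := ⟨v, hAS hv⟩) (v := ⟨u, hAS hu⟩) huv h.symm)
  simpa using Nat.card_le_card_of_injective f hf

end HasCliqueLowerNeighbors

end SimpleGraph

section Counting

variable {α : Type*} [Fintype α] [DecidableEq α]

theorem card_filter_mem_disjoint_powersetCard_succ {v : α} {T : Finset α} (hv : v ∉ T)
    (t : ℕ) :
    #{S ∈ powersetCard (t + 1) univ | v ∈ S ∧ Disjoint T S} =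
      (Fintype.card α - #T - 1).choose t := by
  have hinj : Set.InjOn (insert v) (powersetCard t (insert v T)ᶜ : Set (Finset α)) :=
    fun R₁ h₁ R₂ h₂ h => by
      have hv {R} (hR : R ∈ (powersetCard t (insert v T)ᶜ : Set (Finset α))) : v ∉ R :=
        fun hvR => by simpa using (mem_powersetCard.1 hR).1 hvR
      rw [← erase_insert (hv h₁), ← erase_insert (hv h₂)]
      exact congrArg (·.erase v) h
  have himage : {S ∈ powersetCard (t + 1) (univ : Finset α) | v ∈ S ∧ Disjoint T S} =
      (powersetCard t (insert v T)ᶜ).image (insert v) := by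
    ext S
    simp only [mem_filter, mem_powersetCard, mem_image, subset_univ, true_and]
    constructor
    · rintro ⟨hS, hvS, hTS⟩
      refine ⟨S.erase v, ⟨?_, by simp [card_erase_of_mem hvS, hS]⟩, insert_erase hvS⟩
      intro x hx
      simp only [mem_erase] at hx
      simp [hx.1, disjoint_left.1 hTS.symm hx.2]
    · rintro ⟨R, ⟨hR, rfl⟩, rfl⟩
      have hvR : v ∉ R := fun h => by simpa using hR h
      refine ⟨card_insert_of_notMem hvR, mem_insert_self _ _, ?_⟩
      rw [disjoint_insert_right]
      exact ⟨hv, disjoint_left.2 fun x hxT hxR => by simpa [hxT] using hR hxR⟩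
  rw [himage, card_image_of_injOn hinj, card_powersetCard, card_compl, card_insert_of_notMem hv,
    Nat.sub_add_eq]

theorem sum_card_filter_disjoint_powersetCard_succ (M : α → Finset α) (hM : ∀ v, v ∉ M v)
    (t : ℕ) :
    ∑ S ∈ powersetCard (t + 1) univ, #{v ∈ S | Disjoint (M v) S} =
      ∑ v, (Fintype.card α - #(M v) - 1).choose t := by
  have h := sum_card_bipartiteAbove_eq_sum_card_bipartiteBelow (s := powersetCard (t + 1) univ)
    (t := univ) (r := fun S v => v ∈ S ∧ Disjoint (M v) S)
  simp only [bipartiteAbove, bipartiteBelow, card_filter_mem_disjoint_powersetCard_succ (hM _)] at h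
  rw [← h]
  congr! 2 with S
  ext; simp

end Counting

theorem Nat.choose_mul_choose_sub_comm (n s k : ℕ) :
    n.choose s * (n - s).choose k = n.choose k * (n - k).choose s := by
  calc n.choose s * (n - s).choose k = n.choose (s + k) * (s + k).choose s := by
        rw [Nat.choose_mul (Nat.le_add_right s k), Nat.add_sub_cancel_left]
    _ = n.choose (s + k) * (s + k).choose k := by rw [Nat.choose_symm_add]
    _ = n.choose k * (n - k).choose s := by
        rw [Nat.choose_mul (Nat.le_add_left k s), Nat.add_sub_cancel]

theorem cast_sub_mul_choose_div_choose_eq {n k t : ℕ} (hkn : k < n) (htn : t + 1 ≤ n) :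
    (((n - k) * (n - k - 1).choose t : ℕ) : ℝ) / n.choose (t + 1) =
      (t + 1 : ℕ) * ((n - (t + 1)).choose k / n.choose k : ℝ) := by
  have hpascal := Nat.add_one_mul_choose_eq (n - k - 1) t
  rw [Nat.sub_add_cancel (by omega)] at hpascal
  have hswap : (n.choose (t + 1) * (n - (t + 1)).choose k : ℝ) =
      n.choose k * (n - k).choose (t + 1) := by
    exact_mod_cast Nat.choose_mul_choose_sub_comm n (t + 1) k
  have : (0 : ℝ) < n.choose k := by exact_mod_cast Nat.choose_pos hkn.le
  have : (0 : ℝ) < n.choose (t + 1) := by exact_mod_cast Nat.choose_pos htn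
  rw [hpascal]
  field_simp
  push_cast
  linear_combination -(t + 1 : ℝ) * hswap

theorem pow_div_le_choose_div_choose (m : ℕ) {n k : ℕ} (hkn : k ≤ n) :
    (((m + 1 - k : ℕ) : ℝ) / n) ^ k ≤ (m.choose k : ℝ) / n.choose k := by
  have hpos : (0 : ℝ) < n.descFactorial k := by exact_mod_cast Nat.descFactorial_pos.2 hkn
  calc (((m + 1 - k : ℕ) : ℝ) / n) ^ k
      ≤ (m.descFactorial k : ℝ) / n.descFactorial k := by
        rw [div_pow]
        gcongr
        · exact_mod_cast m.pow_sub_le_descFactorial k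
        · exact_mod_cast n.descFactorial_le_pow k
    _ = (m.choose k : ℝ) / n.choose k := by
        simp only [Nat.descFactorial_eq_factorial_mul_choose, Nat.cast_mul]
        exact mul_div_mul_left _ _ (by positivity)

theorem div_add_one_pow_succ_le_exp_neg_one (k : ℕ) :
    ((k : ℝ) / (k + 1)) ^ (k + 1) ≤ Real.exp (-1) := by
  have h := Real.one_sub_div_pow_le_exp_neg (n := k + 1) (t := 1) (by simp)
  rwa [Nat.cast_add_one, one_sub_div (by positivity), add_sub_cancel_right] at h

theorem div_add_one_pow_mul_le_pow {n s : ℝ} {k : ℕ} (hk : 1 ≤ k) (hn : k * (k + 1) ≤ n)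
    (hs_le : (k + 1) * s ≤ n) :
    (k / (k + 1)) ^ k * (1 - (k ^ 2 - 1) / n) ≤ ((n - s + 1 - k) / n) ^ k := by
  have hk1 : (1 : ℝ) ≤ k := by exact_mod_cast hk
  have hn0 : 0 < n := by nlinarith
  set q : ℝ := k / (k + 1)
  set a : ℝ := (k ^ 2 - 1) / (k * n)
  have ha1 : a ≤ 1 := by unfold a; rw [div_le_one (by positivity)]; nlinarith
  have hbase : q * (1 - a) ≤ (n - s + 1 - k) / n := by
    have : q * (1 - a) = (k * n / (k + 1) + 1 - k) / n := by unfold q a; field_simp; ring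
    rw [this]
    gcongr
    rw [div_le_iff₀ (by positivity)]
    linarith
  have hbernoulli : 1 - k * a ≤ (1 - a) ^ k := by
    simpa [sub_eq_add_neg] using one_add_mul_le_pow (a := -a) (by linarith) k
  have hka : k * a = (k ^ 2 - 1) / n := by unfold a; field_simp
  calc q ^ k * (1 - (k ^ 2 - 1) / n) ≤ q ^ k * (1 - a) ^ k := by rw [← hka]; gcongr
    _ = (q * (1 - a)) ^ k := (mul_pow _ _ _).symm
    _ ≤ _ := by
      have : 0 ≤ q * (1 - a) := mul_nonneg (by positivity) (by linarith)
      gcongr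

theorem le_mul_sub_add_one_sub_div_pow {n s : ℝ} {k : ℕ} (hk : 1 ≤ k) (hn : k * (k + 1) ≤ n)
    (hs_le : (k + 1) * s ≤ n) (hs_ge : n - k ≤ (k + 1) * s) :
    k ^ k / (k + 1) ^ (k + 1) * n - (k + 2) / Real.exp 1 ≤ s * ((n - s + 1 - k) / n) ^ k := by
  have hk1 : (1 : ℝ) ≤ k := by exact_mod_cast hk
  have hn0 : 0 < n := by nlinarith
  set q : ℝ := k / (k + 1)
  have hc0 : 0 ≤ 1 - (k ^ 2 - 1) / n := by rw [sub_nonneg, div_le_one hn0]; nlinarith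
  have hcoef : (k : ℝ) ^ k / (k + 1) ^ (k + 1) = q ^ k / (k + 1) := by
    unfold q; rw [div_pow, pow_succ]; field_simp
  have herr : q ^ k / (k + 1) * (k ^ 2 + k - 1) ≤ (k + 2) / Real.exp 1 :=
    calc q ^ k / (k + 1) * (k ^ 2 + k - 1) ≤ q ^ k / (k + 1) * (k * (k + 2)) := by
          gcongr; linarith
      _ = (k + 2) * q ^ (k + 1) := by unfold q; ring
      _ ≤ (k + 2) * Real.exp (-1) := by gcongr; exact div_add_one_pow_succ_le_exp_neg_one k
      _ = (k + 2) / Real.exp 1 := by rw [Real.exp_neg, div_eq_mul_inv]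
  have hlin : n - k ^ 2 - k + 1 ≤ (n - k) * (1 - (k ^ 2 - 1) / n) := by
    have : 0 ≤ k * (k ^ 2 - 1) / n := by apply div_nonneg <;> nlinarith
    have : (n - k) * (1 - (k ^ 2 - 1) / n) = n - k ^ 2 - k + 1 + k * (k ^ 2 - 1) / n := by
      field_simp; ring
    linarith
  calc k ^ k / (k + 1) ^ (k + 1) * n - (k + 2) / Real.exp 1
      ≤ q ^ k / (k + 1) * (n - k ^ 2 - k + 1) := by rw [hcoef]; linarith
    _ ≤ q ^ k / (k + 1) * ((n - k) * (1 - (k ^ 2 - 1) / n)) := by gcongr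
    _ = (n - k) / (k + 1) * (q ^ k * (1 - (k ^ 2 - 1) / n)) := by ring
    _ ≤ s * (q ^ k * (1 - (k ^ 2 - 1) / n)) := by
        gcongr
        rw [div_le_iff₀ (by positivity)]
        linarith
    _ ≤ s * ((n - s + 1 - k) / n) ^ k := by
        have : 0 ≤ s := by nlinarith
        gcongr
        exact div_add_one_pow_mul_le_pow hk hn hs_le

theorem le_div_mul_sub_add_one_sub_div_pow {n k : ℕ} (hk : 0 < k) (hn : k * (k + 1) ≤ n) :
    (k : ℝ) ^ k / (k + 1) ^ (k + 1) * n - (k + 2) / Real.exp 1 ≤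
      (n / (k + 1) : ℕ) * (((n - n / (k + 1) + 1 - k : ℕ) : ℝ) / n) ^ k := by
  have hs_le : (k + 1) * (n / (k + 1)) ≤ n := Nat.mul_div_le n (k + 1)
  have hs_ge : n ≤ (k + 1) * (n / (k + 1)) + k := by
    have := Nat.div_add_mod n (k + 1); have := Nat.mod_lt n (by omega : 0 < k + 1); omega
  have hs_pos : 0 < n / (k + 1) := Nat.div_pos (by nlinarith) (by omega)
  have hks : k + n / (k + 1) ≤ n := by nlinarith
  have hcast : ((n - n / (k + 1) + 1 - k : ℕ) : ℝ) = n - (n / (k + 1) : ℕ) + 1 - k := by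
    rw [Nat.cast_sub (by omega), Nat.cast_add_one, Nat.cast_sub (by omega)]
  rw [hcast]
  refine le_mul_sub_add_one_sub_div_pow hk (by exact_mod_cast hn) (by exact_mod_cast hs_le) ?_
  have : (n : ℝ) ≤ (k + 1) * (n / (k + 1) : ℕ) + k := by exact_mod_cast hs_ge
  linarith

namespace IsKTree

variable {n k : ℕ} {G : SimpleGraph (Fin n)} {M : Fin n → Finset (Fin n)}

theorem adj_and_lt_iff (hG : IsKTree n k G M) {v w : Fin n} :
    G.Adj v w ∧ w < v ↔ w ∈ M v := by
  obtain ⟨hlt, -, -, hadj, -⟩ := hG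
  refine ⟨fun ⟨h, hwv⟩ => ((hadj v w).1 h).resolve_right fun hv => (hlt w v hv).not_gt hwv,
    fun hw => ⟨(hadj v w).2 (.inl hw), hlt v w hw⟩⟩

theorem hasCliqueLowerNeighbors (hG : IsKTree n k G M) : G.HasCliqueLowerNeighbors :=
  fun v _ hx _ hy hxy => hG.2.2.2.2 v _ (hG.adj_and_lt_iff.1 hx) _ (hG.adj_and_lt_iff.1 hy) hxy

theorem card_filter_disjoint_le_card_connectedComponent (hG : IsKTree n k G M)
    (S : Finset (Fin n)) :
    #{v ∈ S | Disjoint (M v) S} ≤ Nat.card (G.induce (S : Set (Fin n))).ConnectedComponent := by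
  refine hG.hasCliqueLowerNeighbors.card_le_card_connectedComponent_induce (filter_subset _ _) ?_
  intro v hv w hw hvw
  by_contra! hwv
  have hw' : w ∈ M v := hG.adj_and_lt_iff.1 ⟨hvw, hwv.lt_of_ne hvw.ne'⟩
  exact disjoint_left.1 (mem_filter.1 hv).2 hw' hw

theorem mul_choose_le_sum_card_filter_disjoint (hG : IsKTree n k G M) (hkn : k < n) (t : ℕ) :
    (n - k) * (n - k - 1).choose t ≤
      ∑ S ∈ powersetCard (t + 1) univ, #{v ∈ S | Disjoint (M v) S} := by
  obtain ⟨hlt, hcard, -⟩ := hG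
  rw [sum_card_filter_disjoint_powersetCard_succ M fun v hv => (hlt v v hv).false,
    Fintype.card_fin]
  calc (n - k) * (n - k - 1).choose t
      = ∑ v ∈ Ici (⟨k, hkn⟩ : Fin n), (n - k - 1).choose t := by
        rw [sum_const, Fin.card_Ici, smul_eq_mul]
    _ = ∑ v ∈ Ici (⟨k, hkn⟩ : Fin n), (n - #(M v) - 1).choose t :=
        sum_congr rfl fun v hv => by rw [hcard v (Fin.le_def.1 (Finset.mem_Ici.1 hv))]
    _ ≤ ∑ v, (n - #(M v) - 1).choose t := sum_le_sum_of_subset (subset_univ _)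

end IsKTree

/-- For a `k`-tree on `n ≥ k(k+1)` vertices and a uniformly random
    `⌊n/(k+1)⌋`-element subset `S` of its vertices, the expected number of connected
    components of `G[S]` is at least `k^k/(k+1)^(k+1) · n − (k+2)/e`. -/
theorem kTree_expected_components_ge (n k : ℕ) (G : SimpleGraph (Fin n))
    (M : Fin n → Finset (Fin n)) (hG : IsKTree n k G M)
    (hk : 0 < k) (hn : k * (k + 1) ≤ n) :
    (k : ℝ)^k / (k+1 : ℝ)^(k+1) * n - (k + 2 : ℝ) / Real.exp 1
      ≤ (∑ S ∈ (Finset.univ : Finset (Fin n)).powersetCard (n / (k + 1)),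
          (Nat.card ((G.induce (S : Set (Fin n))).ConnectedComponent) : ℝ)) /
          (((Finset.univ : Finset (Fin n)).powersetCard (n / (k + 1))).card : ℝ) := by
  have hkn : k < n := by nlinarith
  have hbound := le_div_mul_sub_add_one_sub_div_pow hk hn
  obtain ⟨t, ht⟩ : ∃ t, n / (k + 1) = t + 1 :=
    Nat.exists_eq_add_one.2 (Nat.div_pos (by nlinarith) (Nat.succ_pos k))
  rw [ht] at hbound ⊢
  rw [card_powersetCard, card_univ, Fintype.card_fin]
  calc _ ≤ ((t + 1 : ℕ) : ℝ) * ((((n - (t + 1) + 1 - k : ℕ) : ℝ)) / n) ^ k := hbound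
    _ ≤ ((t + 1 : ℕ) : ℝ) * (((n - (t + 1)).choose k : ℝ) / n.choose k) := by
        gcongr; exact pow_div_le_choose_div_choose _ hkn.le
    _ = ((n - k) * (n - k - 1).choose t : ℕ) / n.choose (t + 1) :=
        (cast_sub_mul_choose_div_choose_eq hkn (ht ▸ Nat.div_le_self n (k + 1))).symm
    _ ≤ (∑ S ∈ powersetCard (t + 1) univ, #{v ∈ S | Disjoint (M v) S} : ℕ) /
          n.choose (t + 1) := by
        gcongr; exact hG.mul_choose_le_sum_card_filter_disjoint hkn t
    _ ≤ _ := by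
        push_cast
        gcongr with S
        exact_mod_cast hG.card_filter_disjoint_le_card_connectedComponent S
end

section
/- Let V be a finite set, E a family of subsets of V, and R a random subset of V where each element is included independently. Let X = Σ_{A∈E} 1[A ⊆ R]. Then for every ε ∈ (0,1], P(X ≤ (1-ε)E[X]) ≤ exp(−(εE[X])²/(2(E[X] + Σ_{(A,B): A≠B, A∩B≠∅} E[1[A⊆R]·1[B⊆R]]))). -/
/-!
Write `ψ(t) = 𝔼[e^{-tX}]` and `μ = 𝔼X`. Since `-ψ'(t) = ∑_A 𝔼[X_A e^{-tX}]`, it suffices to bound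
each term from below. Split `X = Y_A + Z_A`, where `Y_A` counts the members of `𝓔` meeting `A`.
`Z_A` only depends on the coordinates outside `A`, so it is independent of `X_A`; conditionally on
`A ⊆ R`, both `e^{-tY_A}` and `e^{-tZ_A}` are decreasing, so the Harris (FKG) inequality and
`e^{-x} ≥ 1 - x` give `𝔼[X_A e^{-tX}] ≥ (𝔼X_A - t 𝔼[X_A Y_A]) ψ(t)`. Summing over `A` yields
`-ψ' ≥ (μ - t(μ + Δ)) ψ`, hence `ψ(t) ≤ exp(-μt + (μ + Δ)t²/2)` for `t ≥ 0`, and Markov's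
inequality for `e^{-tX}` at `t = εμ/(μ + Δ)` concludes.
-/

open MeasureTheory ProbabilityTheory Finset Real

theorem le_mul_exp_of_hasDerivAt {f f' : ℝ → ℝ} {a b : ℝ} (hf : ∀ t, HasDerivAt f (f' t) t)
    (hf' : ∀ t, 0 < t → f' t ≤ -(a - b * t) * f t) {T : ℝ} (hT : 0 ≤ T) :
    f T ≤ f 0 * exp (-a * T + b / 2 * T ^ 2) := by
  let g (t : ℝ) : ℝ := f t * exp (a * t - b / 2 * t ^ 2)
  have hg (t : ℝ) : HasDerivAt g
      (f' t * exp (a * t - b / 2 * t ^ 2) +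
        f t * (exp (a * t - b / 2 * t ^ 2) * (a - b * t))) t := by
    refine (hf t).mul (HasDerivAt.exp ((((hasDerivAt_id t).const_mul a).sub
      ((hasDerivAt_pow 2 t).const_mul (b / 2))).congr_deriv ?_))
    simp only [mul_one, Nat.cast_ofNat]
    ring
  have hanti : AntitoneOn g (Set.Ici 0) := by
    refine antitoneOn_of_deriv_nonpos (convex_Ici 0)
      (HasDerivAt.continuousOn fun t _ => hg t)
      (fun t _ => (hg t).differentiableAt.differentiableWithinAt)
      fun t ht => ?_
    rw [interior_Ici] at ht
    rw [(hg t).deriv]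
    nlinarith [hf' t ht, exp_pos (a * t - b / 2 * t ^ 2)]
  have hgT : g T ≤ f 0 := by simpa [g] using hanti Set.self_mem_Ici hT hT
  calc f T = g T * exp (-a * T + b / 2 * T ^ 2) := by
        rw [mul_assoc, ← exp_add, show a * T - b / 2 * T ^ 2 + (-a * T + b / 2 * T ^ 2) = 0 by ring,
          exp_zero, mul_one]
    _ ≤ f 0 * exp (-a * T + b / 2 * T ^ 2) := by gcongr

lemma measurable_finset_of_measurableSet_mem {Ω α : Type*} [MeasurableSpace Ω]
    {R : Ω → Finset α} (hmeas : ∀ a, MeasurableSet {ω | a ∈ R ω}) : Measurable R :=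
  measurable_finset_iff.2 fun a => measurableSet_setOfPred.1 (hmeas a)

namespace Janson

variable {V : Type*} [DecidableEq V]

def subsetIndicator (A S : Finset V) : ℝ := if A ⊆ S then 1 else 0

lemma subsetIndicator_nonneg (A : Finset V) : 0 ≤ subsetIndicator A := fun S => by
  unfold subsetIndicator
  positivity

def numContained (𝓔 : Finset (Finset V)) (S : Finset V) : ℝ := #{A ∈ 𝓔 | A ⊆ S}

lemma numContained_mono (𝓔 : Finset (Finset V)) : Monotone (numContained 𝓔) := fun S T hST => by
  unfold numContained
  gcongr

lemma numContained_filter_add_filter_not (𝓔 : Finset (Finset V)) (P : Finset V → Prop)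
    [DecidablePred P] (S : Finset V) :
    numContained {A ∈ 𝓔 | P A} S + numContained {A ∈ 𝓔 | ¬P A} S = numContained 𝓔 S := by
  simp only [numContained]
  rw [filter_comm, filter_comm (fun A => ¬P A)]
  exact_mod_cast card_filter_add_card_filter_not _

lemma numContained_sdiff {𝓔 : Finset (Finset V)} {A : Finset V} (h𝓔 : ∀ B ∈ 𝓔, Disjoint A B)
    (S : Finset V) : numContained 𝓔 S = numContained 𝓔 (S \ A) := by
  simp only [numContained]
  congr 2
  exact filter_congr fun B hB => ⟨fun h => subset_sdiff.2 ⟨h, (h𝓔 B hB).symm⟩,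
    fun h => h.trans sdiff_subset⟩

lemma numContained_eq_sum (𝓔 : Finset (Finset V)) (S : Finset V) :
    numContained 𝓔 S = ∑ A ∈ 𝓔, subsetIndicator A S := by
  simp only [numContained, subsetIndicator, sum_boole]

lemma subsetIndicator_mul_subsetIndicator (A B : Finset V) :
    subsetIndicator A * subsetIndicator B = subsetIndicator (A ∪ B) := by
  ext S
  by_cases hA : A ⊆ S <;> by_cases hB : B ⊆ S <;> simp [subsetIndicator, union_subset_iff, hA, hB]

variable [Fintype V]

/-- The law of a random subset of `V` containing each `v` independently with probability `p v`. -/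
def weight (p : V → ℝ) (S : Finset V) : ℝ := ∏ v, if v ∈ S then p v else 1 - p v

def expect (p : V → ℝ) (f : Finset V → ℝ) : ℝ := ∑ S, weight p S * f S

variable {p : V → ℝ}

def delta (p : V → ℝ) (𝓔 : Finset (Finset V)) : ℝ :=
  ∑ A ∈ 𝓔, ∑ B ∈ 𝓔, if A ≠ B ∧ ¬Disjoint A B then expect p (subsetIndicator (A ∪ B)) else 0

lemma weight_nonneg (hp : ∀ v, p v ∈ Set.Icc 0 1) (S : Finset V) : 0 ≤ weight p S :=
  prod_nonneg fun v _ => by split_ifs <;> linarith [(hp v).1, (hp v).2]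

lemma sum_weight : ∑ S, weight p S = 1 := by
  have h := prod_add p (fun v => 1 - p v) univ
  simp only [add_sub_cancel, prod_const_one, powerset_univ] at h
  rw [h]
  refine sum_congr rfl fun S _ => ?_
  rw [weight, prod_ite, filter_mem_eq_inter, univ_inter]
  congr 1
  exact prod_congr (by ext; simp) fun _ _ => rfl

lemma weight_mul_weight (S T : Finset V) :
    weight p S * weight p T = weight p (S ∩ T) * weight p (S ∪ T) := by
  simp only [weight, ← prod_mul_distrib]
  refine prod_congr rfl fun v _ => ?_
  by_cases hS : v ∈ S <;> by_cases hT : v ∈ T <;> simp [hS, hT, mul_comm]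

lemma expect_const (c : ℝ) : expect p (fun _ => c) = c := by
  rw [expect, ← sum_mul, sum_weight, one_mul]

lemma expect_mono (hp : ∀ v, p v ∈ Set.Icc 0 1) {f g : Finset V → ℝ} (hfg : f ≤ g) :
    expect p f ≤ expect p g :=
  sum_le_sum fun S _ => mul_le_mul_of_nonneg_left (hfg S) (weight_nonneg hp S)

lemma expect_nonneg (hp : ∀ v, p v ∈ Set.Icc 0 1) {f : Finset V → ℝ} (hf : 0 ≤ f) :
    0 ≤ expect p f :=
  sum_nonneg fun S _ => mul_nonneg (weight_nonneg hp S) (hf S)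

lemma expect_const_mul (c : ℝ) (f : Finset V → ℝ) :
    expect p (fun S => c * f S) = c * expect p f := by
  simp only [expect, mul_left_comm _ c, ← mul_sum]

lemma expect_sum {ι : Type*} (s : Finset ι) (f : ι → Finset V → ℝ) :
    expect p (fun S => ∑ i ∈ s, f i S) = ∑ i ∈ s, expect p (f i) := by
  simp only [expect, mul_sum]
  exact sum_comm

lemma expect_mul_of_inter_of_sdiff (A : Finset V) {g h : Finset V → ℝ}
    (hg : ∀ S, g S = g (S ∩ A)) (hh : ∀ S, h S = h (S \ A)) :
    expect p (g * h) = expect p g * expect p h := by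
  -- swapping the `A`-parts of two sets preserves the product of their weights
  let σ : Finset V × Finset V → Finset V × Finset V :=
    fun x => (x.1 ∩ A ∪ x.2 \ A, x.2 ∩ A ∪ x.1 \ A)
  have hσ : Function.Involutive σ := by
    rintro ⟨S, T⟩
    ext v <;> simp only [σ, mem_union, mem_inter, mem_sdiff] <;> tauto
  have hweight (x) : weight p (σ x).1 * weight p (σ x).2 = weight p x.1 * weight p x.2 := by
    simp only [σ, weight, ← prod_mul_distrib]
    refine prod_congr rfl fun v _ => ?_
    by_cases hA : v ∈ A <;> by_cases hS : v ∈ x.1 <;> by_cases hT : v ∈ x.2 <;>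
      simp [hA, hS, hT, mul_comm]
  have hinter (x : Finset V × Finset V) : (σ x).1 ∩ A = x.1 ∩ A := by
    ext v; simp only [σ, mem_union, mem_inter, mem_sdiff]; tauto
  have hsdiff (x : Finset V × Finset V) : (σ x).2 \ A = x.1 \ A := by
    ext v; simp only [σ, mem_union, mem_inter, mem_sdiff]; tauto
  calc expect p (g * h)
      = ∑ x : Finset V × Finset V, weight p x.1 * weight p x.2 * (g (x.1 ∩ A) * h (x.1 \ A)) := by
        simp only [Fintype.sum_prod_type, ← sum_mul, ← mul_sum, sum_weight, mul_one, expect,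
          Pi.mul_apply, ← hg, ← hh]
    _ = ∑ x : Finset V × Finset V, weight p x.1 * weight p x.2 * (g (x.1 ∩ A) * h (x.2 \ A)) :=
        Fintype.sum_equiv hσ.toPerm _ _ fun x => by
          simp only [Function.Involutive.coe_toPerm, hweight, hinter, hsdiff]
    _ = expect p g * expect p h := by
        simp only [expect, sum_mul_sum, Fintype.sum_prod_type, ← hg, ← hh]
        exact sum_congr rfl fun _ _ => sum_congr rfl fun _ _ => by ring

lemma fkg_subsetIndicator (hp : ∀ v, p v ∈ Set.Icc 0 1) (A : Finset V) {f g : Finset V → ℝ}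
    (hf₀ : 0 ≤ f) (hg₀ : 0 ≤ g) (hf : Antitone f) (hg : Antitone g) :
    expect p (subsetIndicator A * f) * expect p (subsetIndicator A * g) ≤
      expect p (subsetIndicator A) * expect p (subsetIndicator A * (f * g)) := by
  let ν : Finset V → ℝ := fun S => weight p S * subsetIndicator A S
  have hν₀ : 0 ≤ ν := fun S => mul_nonneg (weight_nonneg hp S) (subsetIndicator_nonneg A S)
  have hν (S T : Finset V) : ν S * ν T ≤ ν (S ∩ T) * ν (S ∪ T) := by
    by_cases hS : A ⊆ S
    · by_cases hT : A ⊆ T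
      · simp [ν, subsetIndicator, hS, hT, subset_inter hS hT, hS.trans subset_union_left,
          weight_mul_weight S T]
      · simpa [ν, subsetIndicator, hT] using mul_nonneg (hν₀ (S ∩ T)) (hν₀ (S ∪ T))
    · simpa [ν, subsetIndicator, hS] using mul_nonneg (hν₀ (S ∩ T)) (hν₀ (S ∪ T))
  have := fkg (α := (Finset V)ᵒᵈ) (μ := ν ∘ OrderDual.ofDual) (f := f ∘ OrderDual.ofDual)
    (g := g ∘ OrderDual.ofDual) (fun S => hν₀ _) (fun S => hf₀ _) (fun S => hg₀ _)
    hf.dual_left hg.dual_left fun S T => (hν S T).trans_eq (mul_comm _ _)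
  have hexpect (F : Finset V → ℝ) : expect p (subsetIndicator A * F) = ∑ S, ν S * F S :=
    sum_congr rfl fun S _ => (mul_assoc _ _ _).symm
  rw [hexpect, hexpect, hexpect]
  exact this

lemma sub_mul_expect_le_expect_mul_exp (hp : ∀ v, p v ∈ Set.Icc 0 1) {g : Finset V → ℝ}
    (hg : 0 ≤ g) (Y : Finset V → ℝ) (t : ℝ) :
    expect p g - t * expect p (g * Y) ≤ expect p (g * fun S => exp (-t * Y S)) := by
  simp only [expect, mul_sum, ← sum_sub_distrib, Pi.mul_apply]
  gcongr with S
  nlinarith [add_one_le_exp (-t * Y S), mul_nonneg (weight_nonneg hp S) (hg S)]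

lemma sub_mul_expect_exp_le_expect_subsetIndicator_mul (hp : ∀ v, p v ∈ Set.Icc 0 1)
    (𝓔 : Finset (Finset V)) (A : Finset V) {t : ℝ} (ht : 0 ≤ t) :
    (expect p (subsetIndicator A) -
        t * expect p (subsetIndicator A * numContained {B ∈ 𝓔 | ¬Disjoint A B})) *
      expect p (fun S => exp (-t * numContained 𝓔 S)) ≤
    expect p (subsetIndicator A * fun S => exp (-t * numContained 𝓔 S)) := by
  set Y := numContained {B ∈ 𝓔 | ¬Disjoint A B}
  set Z := numContained {B ∈ 𝓔 | Disjoint A B}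
  set P := expect p (subsetIndicator A)
  set M := expect p (subsetIndicator A * Y)
  set ψ := expect p (fun S => exp (-t * numContained 𝓔 S))
  let e (F : Finset V → ℝ) (S : Finset V) : ℝ := exp (-t * F S)
  have he_anti (F : Finset V → ℝ) (hF : Monotone F) : Antitone (e F) := fun S T hST =>
    exp_le_exp.2 (by have := hF hST; nlinarith)
  have hY₀ : 0 ≤ Y := fun S => Nat.cast_nonneg _
  have hsplit (S : Finset V) : numContained 𝓔 S = Z S + Y S :=
    (numContained_filter_add_filter_not 𝓔 (Disjoint A) S).symm
  have hψ : 0 ≤ ψ := expect_nonneg hp fun S => (exp_pos _).le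
  have hP₀ : 0 ≤ P := expect_nonneg hp (subsetIndicator_nonneg A)
  have hY_bound : P - t * M ≤ expect p (subsetIndicator A * e Y) :=
    sub_mul_expect_le_expect_mul_exp hp (subsetIndicator_nonneg A) Y t
  have hZ_bound : P * ψ ≤ expect p (subsetIndicator A * e Z) := by
    rw [expect_mul_of_inter_of_sdiff A (fun S => by simp [subsetIndicator, subset_inter_iff])
      fun S => by simp only [e, Z]; rw [numContained_sdiff (fun B hB => (mem_filter.1 hB).2) S]]
    refine mul_le_mul_of_nonneg_left (expect_mono hp fun S => exp_le_exp.2 ?_) hP₀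
    nlinarith [hsplit S, mul_nonneg ht (hY₀ S)]
  have hfkg := fkg_subsetIndicator hp A (fun S => (exp_pos _).le) (fun S => (exp_pos _).le)
    (he_anti Y (numContained_mono _)) (he_anti Z (numContained_mono _))
  have he_split : e Y * e Z = fun S => exp (-t * numContained 𝓔 S) := by
    ext S
    rw [Pi.mul_apply, ← exp_add, hsplit]
    ring_nf
  rcases le_or_gt (P - t * M) 0 with hneg | hpos
  · exact (mul_nonpos_of_nonpos_of_nonneg hneg hψ).trans
      (expect_nonneg hp (mul_nonneg (subsetIndicator_nonneg A) fun S => (exp_pos _).le))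
  · have hM : 0 ≤ M := expect_nonneg hp (mul_nonneg (subsetIndicator_nonneg A) hY₀)
    have hP : 0 < P := by nlinarith
    refine le_of_mul_le_mul_left ?_ hP
    calc P * ((P - t * M) * ψ) = (P - t * M) * (P * ψ) := by ring
      _ ≤ expect p (subsetIndicator A * e Y) * expect p (subsetIndicator A * e Z) :=
        mul_le_mul hY_bound hZ_bound (by positivity) (hpos.le.trans hY_bound)
      _ ≤ P * expect p (subsetIndicator A * (e Y * e Z)) := hfkg
      _ = _ := by rw [he_split]

lemma expect_numContained (𝓔 : Finset (Finset V)) :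
    expect p (numContained 𝓔) = ∑ A ∈ 𝓔, expect p (subsetIndicator A) := by
  rw [← expect_sum]
  simp only [← numContained_eq_sum]

lemma sum_expect_mul_numContained_le (hp : ∀ v, p v ∈ Set.Icc 0 1) (𝓔 : Finset (Finset V)) :
    ∑ A ∈ 𝓔, expect p (subsetIndicator A * numContained {B ∈ 𝓔 | ¬Disjoint A B}) ≤
      expect p (numContained 𝓔) + delta p 𝓔 := by
  have hterm (A : Finset V) : expect p (subsetIndicator A * numContained {B ∈ 𝓔 | ¬Disjoint A B}) =
      ∑ B ∈ 𝓔, if ¬Disjoint A B then expect p (subsetIndicator (A ∪ B)) else 0 := by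
    have : subsetIndicator A * numContained {B ∈ 𝓔 | ¬Disjoint A B} =
        fun S => ∑ B ∈ {B ∈ 𝓔 | ¬Disjoint A B}, subsetIndicator (A ∪ B) S := by
      ext S
      simp only [Pi.mul_apply, numContained_eq_sum, mul_sum, ← subsetIndicator_mul_subsetIndicator]
    rw [this, expect_sum, sum_filter]
  rw [expect_numContained, delta, ← sum_add_distrib]
  refine sum_le_sum fun A hA => ?_
  rw [hterm, ← sum_ite_eq_of_mem 𝓔 A (fun _ => expect p (subsetIndicator A)) hA, ← sum_add_distrib]
  refine sum_le_sum fun B _ => ?_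
  have hq : 0 ≤ expect p (subsetIndicator (A ∪ B)) :=
    expect_nonneg hp (subsetIndicator_nonneg _)
  by_cases hAB : A = B
  · subst hAB
    rw [union_self] at hq
    simp only [union_self, if_true, ne_eq, not_true_eq_false, false_and, if_false, add_zero]
    split_ifs <;> linarith
  · simp [hAB]

lemma sub_mul_expect_exp_le_expect_mul_exp (hp : ∀ v, p v ∈ Set.Icc 0 1)
    (𝓔 : Finset (Finset V)) {t : ℝ} (ht : 0 ≤ t) :
    (expect p (numContained 𝓔) - t * (expect p (numContained 𝓔) + delta p 𝓔)) *
        expect p (fun S => exp (-t * numContained 𝓔 S)) ≤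
      expect p (fun S => numContained 𝓔 S * exp (-t * numContained 𝓔 S)) := by
  have hψ : 0 ≤ expect p (fun S => exp (-t * numContained 𝓔 S)) :=
    expect_nonneg hp fun S => (exp_pos _).le
  calc _ ≤ ∑ A ∈ 𝓔, (expect p (subsetIndicator A) -
          t * expect p (subsetIndicator A * numContained {B ∈ 𝓔 | ¬Disjoint A B})) *
            expect p (fun S => exp (-t * numContained 𝓔 S)) := by
        rw [← sum_mul, sum_sub_distrib, ← mul_sum, ← expect_numContained]
        gcongr
        exact sum_expect_mul_numContained_le hp 𝓔
    _ ≤ ∑ A ∈ 𝓔, expect p (subsetIndicator A * fun S => exp (-t * numContained 𝓔 S)) :=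
        sum_le_sum fun A _ => sub_mul_expect_exp_le_expect_subsetIndicator_mul hp 𝓔 A ht
    _ = _ := by
        rw [← expect_sum]
        simp only [numContained_eq_sum, sum_mul, Pi.mul_apply]

lemma hasDerivAt_expect_exp (𝓔 : Finset (Finset V)) (t : ℝ) :
    HasDerivAt (fun t => expect p fun S => exp (-t * numContained 𝓔 S))
      (-expect p fun S => numContained 𝓔 S * exp (-t * numContained 𝓔 S)) t := by
  refine (HasDerivAt.fun_sum (u := univ) fun S _ =>
    (((hasDerivAt_neg t).mul_const (numContained 𝓔 S)).exp).const_mul (weight p S)).congr_deriv ?_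
  simp only [expect, ← sum_neg_distrib]
  exact sum_congr rfl fun S _ => by ring

lemma expect_exp_neg_mul_le (hp : ∀ v, p v ∈ Set.Icc 0 1) (𝓔 : Finset (Finset V)) {T : ℝ}
    (hT : 0 ≤ T) :
    expect p (fun S => exp (-T * numContained 𝓔 S)) ≤
      exp (-expect p (numContained 𝓔) * T +
        (expect p (numContained 𝓔) + delta p 𝓔) / 2 * T ^ 2) := by
  have := le_mul_exp_of_hasDerivAt (hasDerivAt_expect_exp 𝓔)
    (a := expect p (numContained 𝓔)) (b := expect p (numContained 𝓔) + delta p 𝓔)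
    (fun t ht => by linarith [sub_mul_expect_exp_le_expect_mul_exp hp 𝓔 ht.le]) hT
  simpa [expect_const] using this

theorem expect_lowerTail_le (hp : ∀ v, p v ∈ Set.Icc 0 1) (𝓔 : Finset (Finset V)) {ε : ℝ}
    (hε : 0 ≤ ε) :
    expect p (fun S => if numContained 𝓔 S ≤ (1 - ε) * expect p (numContained 𝓔) then 1 else 0) ≤
      exp (-(ε * expect p (numContained 𝓔)) ^ 2 /
        (2 * (expect p (numContained 𝓔) + delta p 𝓔))) := by
  set μ := expect p (numContained 𝓔)
  set Δ := delta p 𝓔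
  have hμ : 0 ≤ μ := expect_nonneg hp fun S => Nat.cast_nonneg _
  have hΔ : 0 ≤ Δ := sum_nonneg fun A _ => sum_nonneg fun B _ => by
    split_ifs
    · exact expect_nonneg hp (subsetIndicator_nonneg _)
    · exact le_rfl
  set T := ε * μ / (μ + Δ)
  have hT : 0 ≤ T := by positivity
  have hchernoff : (fun S => if numContained 𝓔 S ≤ (1 - ε) * μ then (1 : ℝ) else 0) ≤
      fun S => exp (T * ((1 - ε) * μ)) * exp (-T * numContained 𝓔 S) := fun S => by
    dsimp only
    rw [← exp_add]
    split_ifs with h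
    · exact one_le_exp (by nlinarith)
    · exact (exp_pos _).le
  calc _ ≤ exp (T * ((1 - ε) * μ)) * expect p (fun S => exp (-T * numContained 𝓔 S)) :=
        (expect_mono hp hchernoff).trans_eq (expect_const_mul _ _)
    _ ≤ exp (T * ((1 - ε) * μ)) * exp (-μ * T + (μ + Δ) / 2 * T ^ 2) := by
        gcongr; exact expect_exp_neg_mul_le hp 𝓔 hT
    _ = _ := by
        rw [← exp_add]
        congr 1
        -- if `μ + Δ = 0` then `T = 0` by the convention `x / 0 = 0`, and both sides vanish
        rcases eq_or_ne (μ + Δ) 0 with h | h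
        · simp [T, h]
        · simp only [T]; field_simp; ring

variable {Ω : Type*} [MeasureSpace Ω] [IsProbabilityMeasure (ℙ : Measure Ω)] {R : Ω → Finset V}

lemma measure_preimage_singleton_toReal_eq_weight (hmeas : ∀ v, MeasurableSet {ω | v ∈ R ω})
    (hindep : iIndepSet (fun v => {ω | v ∈ R ω}) ℙ) (S : Finset V) :
    (ℙ (R ⁻¹' {S})).toReal = weight (fun v => (ℙ {ω | v ∈ R ω}).toReal) S := by
  have hset : R ⁻¹' {S} = ⋂ v, if v ∈ S then {ω | v ∈ R ω} else {ω | v ∈ R ω}ᶜ := by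
    ext ω
    simp only [Set.mem_preimage, Set.mem_singleton_iff, Set.mem_iInter, Finset.ext_iff]
    refine forall_congr' fun v => ?_
    split_ifs with hv <;> simp [hv]
  rw [hset, ((iIndepSet_iff_iIndep _ _).1 hindep).meas_iInter fun v => ?_,
    ENNReal.toReal_prod]
  · refine prod_congr rfl fun v _ => ?_
    split_ifs
    · rfl
    · rw [prob_compl_eq_one_sub (hmeas v), ENNReal.toReal_sub_of_le prob_le_one ENNReal.one_ne_top,
        ENNReal.toReal_one]
  · split_ifs
    · exact MeasurableSpace.measurableSet_generateFrom (Set.mem_singleton _)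
    · exact (MeasurableSpace.measurableSet_generateFrom (Set.mem_singleton _)).compl

lemma integral_comp_eq_expect (hmeas : ∀ v, MeasurableSet {ω | v ∈ R ω})
    (hindep : iIndepSet (fun v => {ω | v ∈ R ω}) ℙ) (f : Finset V → ℝ) :
    ∫ ω, f (R ω) = expect (fun v => (ℙ {ω | v ∈ R ω}).toReal) f := by
  have hR := measurable_finset_of_measurableSet_mem hmeas
  rw [← integral_map hR.aemeasurable (measurable_of_countable f).aestronglyMeasurable,
    integral_fintype .of_finite]
  refine sum_congr rfl fun S _ => ?_
  rw [smul_eq_mul, map_measureReal_apply hR (measurableSet_singleton S),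
    measureReal_def, measure_preimage_singleton_toReal_eq_weight hmeas hindep]

lemma measure_setOf_toReal_eq_expect (hmeas : ∀ v, MeasurableSet {ω | v ∈ R ω})
    (hindep : iIndepSet (fun v => {ω | v ∈ R ω}) ℙ) (P : Finset V → Prop) [DecidablePred P] :
    (ℙ {ω | P (R ω)}).toReal =
      expect (fun v => (ℙ {ω | v ∈ R ω}).toReal) fun S => if P S then 1 else 0 := by
  have hR := measurable_finset_of_measurableSet_mem hmeas
  calc (ℙ {ω | P (R ω)}).toReal = ∫ ω, (R ⁻¹' {S | P S}).indicator 1 ω :=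
        (integral_indicator_one (hR (Set.to_countable _).measurableSet)).symm
    _ = _ := by
        rw [← integral_comp_eq_expect hmeas hindep]
        congr 1
        ext ω
        simp [Set.indicator_apply]

end Janson

open Janson in
theorem janson_inequality_general {Ω : Type*} [MeasureSpace Ω]
    [IsProbabilityMeasure (ℙ : Measure Ω)]
    {V : Type*} [Fintype V] [DecidableEq V]
    (R : Ω → Finset V)
    (hmeas : ∀ v : V, MeasurableSet {ω | v ∈ R ω})
    (hindep : iIndepSet (fun v : V => {ω | v ∈ R ω}) ℙ)
    (𝓔 : Finset (Finset V))
    (X : Ω → ℝ) (hX : X = fun ω => ((𝓔.filter (fun A => A ⊆ R ω)).card : ℝ))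
    (ε : ℝ) (hε : 0 < ε) :
    (ℙ {ω | X ω ≤ (1 - ε) * ∫ ω, X ω}).toReal ≤
      Real.exp (-(ε * ∫ ω, X ω)^2 /
        (2 * ((∫ ω, X ω) +
          ∑ A ∈ 𝓔, ∑ B ∈ 𝓔,
            if A ≠ B ∧ ¬ Disjoint A B then
              (ℙ {ω | A ⊆ R ω ∧ B ⊆ R ω}).toReal else 0))) := by
  set p : V → ℝ := fun v => (ℙ {ω | v ∈ R ω}).toReal
  have hp (v : V) : p v ∈ Set.Icc 0 1 := ⟨ENNReal.toReal_nonneg, measureReal_le_one⟩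
  have hmean : ∫ ω, X ω = expect p (numContained 𝓔) := by
    subst hX
    exact integral_comp_eq_expect hmeas hindep (numContained 𝓔)
  have hpair (A B : Finset V) :
      (ℙ {ω | A ⊆ R ω ∧ B ⊆ R ω}).toReal = expect p (subsetIndicator (A ∪ B)) := by
    rw [measure_setOf_toReal_eq_expect hmeas hindep fun S => A ⊆ S ∧ B ⊆ S]
    congr 1
    ext S
    simp only [subsetIndicator, union_subset_iff]
  have hevent : (ℙ {ω | X ω ≤ (1 - ε) * ∫ ω, X ω}).toReal =
      expect p fun S =>
        if numContained 𝓔 S ≤ (1 - ε) * expect p (numContained 𝓔) then 1 else 0 := by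
    rw [hmean, hX]
    exact measure_setOf_toReal_eq_expect hmeas hindep fun S => numContained 𝓔 S ≤ _
  rw [hevent, hmean]
  simp only [hpair]
  exact expect_lowerTail_le hp 𝓔 hε.le

/-- Janson's inequality: `R` is a random subset of a finite set `V` with independent
    element inclusions, `𝓔` a family of subsets of `V`, `X = Σ_{A ∈ 𝓔} 1[A ⊆ R]`.
    Then for `0 < ε ≤ 1`,
    `P(X ≤ (1-ε)E[X]) ≤ exp(-(εE[X])² / (2(E[X] + Σ_{A≠B, A∩B≠∅} E[1[A⊆R]1[B⊆R]])))`. -/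
theorem janson_inequality {Ω : Type*} [MeasureSpace Ω]
    [IsProbabilityMeasure (ℙ : Measure Ω)]
    {V : Type*} [Fintype V] [DecidableEq V]
    (R : Ω → Finset V)
    (hmeas : ∀ v : V, MeasurableSet {ω | v ∈ R ω})
    (hindep : iIndepSet (fun v : V => {ω | v ∈ R ω}) ℙ)
    (𝓔 : Finset (Finset V))
    (X : Ω → ℝ) (hX : X = fun ω => ((𝓔.filter (fun A => A ⊆ R ω)).card : ℝ))
    (ε : ℝ) (hε : 0 < ε) (hε1 : ε ≤ 1) :
    (ℙ {ω | X ω ≤ (1 - ε) * ∫ ω, X ω}).toReal ≤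
      Real.exp (-(ε * ∫ ω, X ω)^2 /
        (2 * ((∫ ω, X ω) +
          ∑ A ∈ 𝓔, ∑ B ∈ 𝓔,
            if A ≠ B ∧ ¬ Disjoint A B then
              (ℙ {ω | A ⊆ R ω ∧ B ⊆ R ω}).toReal else 0))) :=
  janson_inequality_general R hmeas hindep 𝓔 X hX ε hε
end
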